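/- Let A be a commutative unital k-algebra, P an A-module, and μ_{k+1} ⊆ A ⊗_k P the submodule generated by all elements (δ^{a_0} ∘ ⋯ ∘ δ^{a_k})(a ⊗ p), where δ^b(a' ⊗ p) = a' ⊗ bp − ba' ⊗ p. Define J^k(P) = (A ⊗_k P)/μ_{k+1} and j_k : P → J^k(P), p ↦ [1 ⊗ p]. Then j_k is a differential operator of order ≤ k, and for every A-module Q and every differential operator Δ : P → Q of order ≤ k there exists a unique A-module homomorphism h_Δ : J^k(P) → Q with Δ = h_Δ ∘ j_k. -/
import Mathlib


open LinearMap

variable (k A : Type*) [CommRing k] [CommRing A] [Algebra k A]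

section Defs

variable {P Q : Type*}
  [AddCommGroup P] [Module k P] [Module A P] [IsScalarTower k A P]
  [AddCommGroup Q] [Module k Q] [Module A Q] [IsScalarTower k A Q]

/-- `δ_a(Δ) = Δ ∘ (a•·) − (a•·) ∘ Δ`. -/
noncomputable def deltaOp (a : A) (f : P →ₗ[k] Q) : P →ₗ[k] Q :=
  f ∘ₗ ((lsmul A P a).restrictScalars k) - ((lsmul A Q a).restrictScalars k) ∘ₗ f

/-- `IsDiffOp k A m Δ` : `Δ` is a differential operator of order `≤ m`, i.e.
`δ_{a_0} ∘ ⋯ ∘ δ_{a_m}(Δ) = 0` for all `a_0, …, a_m ∈ A`. -/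
def IsDiffOp : ℕ → (P →ₗ[k] Q) → Prop
  | 0, f => ∀ a : A, deltaOp k A a f = 0
  | (m + 1), f => ∀ a : A, IsDiffOp m (deltaOp k A a f)

end Defs

open TensorProduct

variable {P : Type*}
  [AddCommGroup P] [Module k P] [Module A P] [IsScalarTower k A P]

/-- `δ^b(a' ⊗ p) = a' ⊗ (b p) − (b a') ⊗ p` on `A ⊗_k P`. -/
noncomputable def deltaJ (b : A) : A ⊗[k] P →ₗ[k] A ⊗[k] P :=
  LinearMap.lTensor A ((lsmul A P b).restrictScalars k)
    - ((lsmul A (A ⊗[k] P) b).restrictScalars k)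

/-- `μ_{m+1} ⊆ A ⊗_k P`: the `A`-submodule generated by all elements
`(δ^{a_0} ∘ ⋯ ∘ δ^{a_m})(a ⊗ p)`. -/
noncomputable def jetRelations (m : ℕ) : Submodule A (A ⊗[k] P) :=
  Submodule.span A
    {x | ∃ (g : Fin (m + 1) → A) (a : A) (p : P),
      x = (List.ofFn g).foldr (fun b y => deltaJ k A b y) (a ⊗ₜ[k] p)}

/-- The `m`-th jet module `J^m(P) = (A ⊗_k P)/μ_{m+1}`. -/
noncomputable abbrev JetMod (m : ℕ) (P : Type*) [AddCommGroup P] [Module k P]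
    [Module A P] [IsScalarTower k A P] :=
  (A ⊗[k] P) ⧸ (jetRelations k A (P := P) m)

/-- The universal operator `j_m : P → J^m(P)`, `p ↦ [1 ⊗ p]`. -/
noncomputable def jetOp (m : ℕ) : P →ₗ[k] JetMod k A m P :=
  ((jetRelations k A (P := P) m).mkQ.restrictScalars k) ∘ₗ TensorProduct.mk k A P 1

section MyAux

variable {Q : Type*}
  [AddCommGroup Q] [Module k Q] [Module A Q] [IsScalarTower k A Q]

lemma my_deltaOp_apply (a : A) (f : P →ₗ[k] Q) (p : P) :
    deltaOp k A a f p = f (a • p) - a • f p := rfl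

lemma my_deltaOp_zero (a : A) : deltaOp k A (P := P) (Q := Q) a 0 = 0 := by
  ext p; simp [my_deltaOp_apply]

/-- Lemma H: `m+1` nested deltas of an order-`≤ m` diff op vanish. -/
lemma my_foldl_deltaOp {n : ℕ} {Δ : P →ₗ[k] Q} (h : IsDiffOp k A n Δ) :
    ∀ l : List A, l.length = n + 1 →
      l.foldl (fun f b => deltaOp k A b f) Δ = 0 := by
  induction n generalizing Δ with
  | zero =>
    rintro (_ | ⟨b, (_ | ⟨c, l⟩)⟩) hl <;> simp_all
    exact h b
  | succ n ih =>
    rintro (_ | ⟨b, l⟩) hl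
    · simp at hl
    · simp only [List.length_cons, Nat.add_right_cancel_iff] at hl
      simpa using ih (h b) l hl

lemma my_deltaJ_tmul (b a : A) (p : P) :
    deltaJ k A b (a ⊗ₜ[k] p) = a ⊗ₜ[k] (b • p) - (b * a) ⊗ₜ[k] p := by
  simp [deltaJ, TensorProduct.smul_tmul']

/-- Lemma F: the lift of `Δ` intertwines `deltaJ` and `deltaOp`. -/
lemma my_lift_deltaJ (Δ : P →ₗ[k] Q) (b : A) (x : A ⊗[k] P) :
    (Δ.liftBaseChange A) (deltaJ k A b x)
      = ((deltaOp k A b Δ).liftBaseChange A) x := by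
  induction x with
  | zero => simp
  | add x y hx hy => simp [map_add, hx, hy]
  | tmul a p =>
    simp only [my_deltaJ_tmul, map_sub, LinearMap.liftBaseChange_tmul,
      my_deltaOp_apply, smul_sub, mul_smul]
    rw [smul_comm b a]

/-- Lemma G: lift versus nested `deltaJ`'s. -/
lemma my_lift_foldr (l : List A) (Δ : P →ₗ[k] Q) (x : A ⊗[k] P) :
    (Δ.liftBaseChange A) (l.foldr (fun b y => deltaJ k A b y) x)
      = ((l.foldl (fun f b => deltaOp k A b f) Δ).liftBaseChange A) x := by
  induction l generalizing Δ with
  | nil => rfl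
  | cons b l ih =>
    simp only [List.foldr_cons, List.foldl_cons]
    rw [my_lift_deltaJ, ih]

/-- `deltaJ b` commutes with the `A`-action on `A ⊗[k] P`. -/
lemma my_deltaJ_smul (b c : A) (x : A ⊗[k] P) :
    deltaJ k A b (c • x) = c • deltaJ k A b x := by
  induction x with
  | zero => simp
  | add x y hx hy => simp [smul_add, map_add, hx, hy]
  | tmul a p =>
    rw [TensorProduct.smul_tmul']
    simp [my_deltaJ_tmul, TensorProduct.smul_tmul', smul_sub, smul_smul,
      mul_left_comm]

lemma my_ofFn_cons {n : ℕ} (b : A) (g : Fin (n + 1) → A) :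
    List.ofFn (Fin.cons b g : Fin (n + 2) → A) = b :: List.ofFn g := by
  simp [List.ofFn_succ]

/-- Key step: `δ_b` of the map `p ↦ [F(1 ⊗ p)]` is `p ↦ [F(δ^b(1 ⊗ p))]`,
provided `F` commutes with the `A`-action. -/
lemma my_deltaOp_Phi (m : ℕ) (F : A ⊗[k] P →ₗ[k] A ⊗[k] P)
    (hF : ∀ c : A, ∀ x, F (c • x) = c • F x) (b : A) :
    deltaOp k A b
      (((jetRelations k A (P := P) m).mkQ.restrictScalars k) ∘ₗ F ∘ₗ
        TensorProduct.mk k A P 1)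
      = ((jetRelations k A (P := P) m).mkQ.restrictScalars k) ∘ₗ
          (F ∘ₗ deltaJ k A b) ∘ₗ TensorProduct.mk k A P 1 := by
  ext p
  have h1 : deltaJ k A b ((1 : A) ⊗ₜ[k] p) = 1 ⊗ₜ[k] (b • p) - b • (1 ⊗ₜ[k] p) := by
    rw [my_deltaJ_tmul]
    rw [TensorProduct.smul_tmul']
    simp
  simp only [my_deltaOp_apply, LinearMap.comp_apply, LinearMap.coe_restrictScalars,
    TensorProduct.mk_apply, h1, map_sub, hF, map_smul]

/-- Lemma E: main induction for part 1. -/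
lemma my_isDiffOp_Phi (m : ℕ) : ∀ (n : ℕ) (F : A ⊗[k] P →ₗ[k] A ⊗[k] P),
    (∀ c : A, ∀ x, F (c • x) = c • F x) →
    (∀ (g : Fin (n + 1) → A) (p : P),
      F ((List.ofFn g).foldr (fun b y => deltaJ k A b y) ((1 : A) ⊗ₜ[k] p))
        ∈ jetRelations k A (P := P) m) →
    IsDiffOp k A n
      (((jetRelations k A (P := P) m).mkQ.restrictScalars k) ∘ₗ F ∘ₗ
        TensorProduct.mk k A P 1) := by
  intro n
  induction n with
  | zero =>
    intro F hF hgen b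
    rw [my_deltaOp_Phi k A m F hF b]
    ext p
    simp only [LinearMap.comp_apply, LinearMap.coe_restrictScalars,
      TensorProduct.mk_apply, Submodule.mkQ_apply, LinearMap.zero_apply]
    rw [Submodule.Quotient.mk_eq_zero]
    have := hgen (fun _ : Fin 1 => b) p
    simpa using this
  | succ n ih =>
    intro F hF hgen b
    show IsDiffOp k A n _
    rw [my_deltaOp_Phi k A m F hF b]
    apply ih
    · intro c x
      simp [my_deltaJ_smul, hF]
    · intro g p
      have := hgen (Fin.cons b g) p
      rwa [my_ofFn_cons, List.foldr_cons] at this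

end MyAux

/-- `j_m` is a differential operator of order `≤ m`, and for every
`A`-module `Q` and every differential operator `Δ : P → Q` of order `≤ m` there is
a unique `A`-module homomorphism `h_Δ : J^m(P) → Q` with `Δ = h_Δ ∘ j_m`
(universal property of jets). -/
theorem jet_universal_property (m : ℕ) :
    IsDiffOp k A m (jetOp k A (P := P) m) ∧
    ∀ (Q : Type*) [AddCommGroup Q] [Module k Q] [Module A Q] [IsScalarTower k A Q]
      (Δ : P →ₗ[k] Q), IsDiffOp k A m Δ →
      ∃! h : JetMod k A m P →ₗ[A] Q, ∀ p : P, Δ p = h (jetOp k A m p) := by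
  constructor
  · -- `j_m` is a differential operator of order `≤ m`
    have h := my_isDiffOp_Phi k A (P := P) m m LinearMap.id
      (by intro c x; simp)
      (fun g p => Submodule.subset_span ⟨g, 1, p, by simp⟩)
    rw [LinearMap.id_comp] at h
    exact h
  · intro Q _ _ _ _ Δ hΔ
    have hle : jetRelations k A (P := P) m ≤ LinearMap.ker (Δ.liftBaseChange A) := by
      rw [jetRelations, Submodule.span_le]
      rintro x ⟨g, a, p, rfl⟩
      simp only [SetLike.mem_coe, LinearMap.mem_ker]
      rw [my_lift_foldr, my_foldl_deltaOp k A hΔ (List.ofFn g) (by simp)]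
      simp
    have hmk : ∀ (a : A) (p : P),
        (jetRelations k A (P := P) m).mkQ (a ⊗ₜ[k] p) = a • jetOp k A m p := by
      intro a p
      have : a ⊗ₜ[k] p = a • ((1 : A) ⊗ₜ[k] p) := by
        rw [TensorProduct.smul_tmul']; simp
      rw [this, map_smul]
      rfl
    refine ⟨(jetRelations k A (P := P) m).liftQ (Δ.liftBaseChange A) hle, ?_, ?_⟩
    · intro p
      show Δ p = (jetRelations k A (P := P) m).liftQ (Δ.liftBaseChange A) hle
        ((jetRelations k A (P := P) m).mkQ ((1 : A) ⊗ₜ[k] p))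
      rw [Submodule.mkQ_apply, Submodule.liftQ_apply, LinearMap.liftBaseChange_tmul,
        one_smul]
    · intro h' hh'
      refine LinearMap.ext fun x => ?_
      obtain ⟨y, rfl⟩ := Submodule.mkQ_surjective _ x
      induction y with
      | zero => simp
      | add u v hu hv => rw [map_add, map_add, map_add, hu, hv]
      | tmul a p =>
        rw [hmk, map_smul, map_smul, ← hh' p]
        congr 1
        show Δ p = (jetRelations k A (P := P) m).liftQ (Δ.liftBaseChange A) hle
          ((jetRelations k A (P := P) m).mkQ ((1 : A) ⊗ₜ[k] p))
        rw [Submodule.mkQ_apply, Submodule.liftQ_apply, LinearMap.liftBaseChange_tmul,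
          one_smul]
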